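/- The Cline-type density f(x) = a e^{−χ(x)} is not subexponential: it is not the case that (∫_0^x f(x−y) f(y) dy)/f(x) → 2 as x → ∞; that is, f ∉ 𝓢₀ (while f ∈ 𝓛₀). -/

import Mathlib

/-
Along `x` with `log (x + 1) ∈ 2πℕ` the exponent of `χ` is maximal: `χ(x) = x^α`, `α = 1/2 + δ`.
For `y ∈ [x/3, 2x/3]` the phase `log (y + 1)` differs from `log (x + 1)` by between `log (4/3)`
and `log 3 < π`, so `χ(y), χ(x - y) ≤ x^β` with `β = 1/2 + δ cos (log (4/3)) < α`. Hence the
convolution ratio is at least `(x/3) a e^{x^α - 2x^β} → ∞` along these `x`.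
Long-tailedness: `χ' = O(x^{α-1} log x) → 0`, so `χ(x + t) - χ(x) → 0` by the mean value theorem.
-/

open MeasureTheory Filter Set

noncomputable section

/-- `χ(x) = x^{1/2 + δ·cos(ln(x+1))}` (real power). -/
def chiFn (δ : ℝ) (x : ℝ) : ℝ := x ^ ((1:ℝ)/2 + δ * Real.cos (Real.log (x + 1)))

/-- The normalizing constant `a = (∫₀^∞ e^{-χ(y)} dy)⁻¹`. -/
def clineA (δ : ℝ) : ℝ := (∫ y in Set.Ioi (0:ℝ), Real.exp (-chiFn δ y))⁻¹

/-- The Cline-type density `f(x) = a e^{-χ(x)}` for `x ≥ 0`, `0` for `x < 0`. -/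
def clineF (δ : ℝ) (x : ℝ) : ℝ :=
  if x < 0 then 0 else clineA δ * Real.exp (-chiFn δ x)

/-- The long-tailed density class `𝓛₀`. -/
def LongTailedDensity (f : ℝ → ℝ) : Prop :=
  (∀ᶠ x in atTop, 0 < f x) ∧
  ∀ t : ℝ, Tendsto (fun x => f (x + t) / f x) atTop (nhds 1)

open Real Topology

theorem cos_add_le_cos_of_cos_eq_one {θ s c : ℝ} (hθ : cos θ = 1) (hc : 0 ≤ c)
    (hcs : c ≤ |s|) (hs : |s| ≤ π) : cos (θ + s) ≤ cos c := by
  have hsin : sin θ = 0 := sin_eq_zero_iff_cos_eq.2 (Or.inl hθ)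
  rw [cos_add, hθ, hsin, one_mul, zero_mul, sub_zero, ← cos_abs]
  exact cos_le_cos_of_nonneg_of_le_pi hc hs hcs

theorem tendsto_sub_comp_add_of_tendsto_deriv {f f' : ℝ → ℝ}
    (hf : ∀ᶠ x in atTop, HasDerivAt f (f' x) x) (hf' : Tendsto f' atTop (𝓝 0)) (t : ℝ) :
    Tendsto (fun x => f (x + t) - f x) atTop (𝓝 0) := by
  rw [Metric.tendsto_nhds]
  intro ε hε
  have hε' : 0 < ε / (|t| + 1) := by positivity
  obtain ⟨N, hN⟩ := eventually_atTop.1 (hf.and (Metric.tendsto_nhds.1 hf' _ hε'))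
  filter_upwards [eventually_ge_atTop (N + |t|)] with x hx
  have hmem : ∀ z, x - |t| ≤ z → z ∈ Ici N := fun z hz => by simp only [mem_Ici]; linarith
  have hmvt := (convex_Ici N).norm_image_sub_le_of_norm_hasDerivWithin_le
    (fun z hz => (hN z hz).1.hasDerivWithinAt)
    (fun z hz => by simpa using (hN z hz).2.le)
    (hmem x (by linarith [abs_nonneg t])) (hmem (x + t) (by linarith [neg_abs_le t]))
  rw [dist_zero_right]
  calc ‖f (x + t) - f x‖ ≤ ε / (|t| + 1) * |t| := by simpa using hmvt
    _ < ε := by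
      rw [div_mul_eq_mul_div, div_lt_iff₀ (by positivity)]
      nlinarith

theorem tendsto_rpow_sub_mul_rpow_atTop {α β : ℝ} (hβ : 0 < β) (hβα : β < α) (C : ℝ) :
    Tendsto (fun x : ℝ => x ^ α - C * x ^ β) atTop atTop := by
  have hfactor : Tendsto (fun x : ℝ => x ^ β * (x ^ (α - β) - C)) atTop atTop :=
    (tendsto_rpow_atTop hβ).atTop_mul_atTop₀
        (tendsto_atTop_add_const_right _ (-C) (tendsto_rpow_atTop (sub_pos.2 hβα)))
  refine hfactor.congr' ?_
  filter_upwards [eventually_gt_atTop 0] with x hx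
  rw [mul_sub, ← rpow_add hx, add_sub_cancel, mul_comm]

-- `chiFn δ x = x ^ chiExponent δ x` holds by `rfl`.
def chiExponent (δ x : ℝ) : ℝ := 1 / 2 + δ * cos (log (x + 1))

def chiFnDeriv (δ x : ℝ) : ℝ :=
  chiExponent δ x * x ^ (chiExponent δ x - 1)
    - δ * sin (log (x + 1)) / (x + 1) * x ^ chiExponent δ x * log x

section Chi

variable {δ : ℝ}

theorem chiExponent_le (hδ : 0 ≤ δ) (x : ℝ) : chiExponent δ x ≤ 1 / 2 + δ := by
  unfold chiExponent; nlinarith [cos_le_one (log (x + 1))]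

theorem le_chiExponent (hδ : 0 ≤ δ) (x : ℝ) : 1 / 2 - δ ≤ chiExponent δ x := by
  unfold chiExponent; nlinarith [neg_one_le_cos (log (x + 1))]

theorem chiFn_nonneg {x : ℝ} (hx : 0 ≤ x) : 0 ≤ chiFn δ x := rpow_nonneg hx _

theorem measurable_chiFn : Measurable (chiFn δ) := by
  unfold chiFn; fun_prop

theorem rpow_sub_one_le_chiFn (hδ0 : 0 ≤ δ) (hδ : δ ≤ 1 / 2) {x : ℝ} (hx : 0 ≤ x) :
    x ^ (1 / 2 - δ) - 1 ≤ chiFn δ x := by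
  rcases le_total x 1 with hx1 | hx1
  · have : x ^ (1 / 2 - δ) ≤ 1 := rpow_le_one hx hx1 (by linarith)
    linarith [chiFn_nonneg (δ := δ) hx]
  · have : x ^ (1 / 2 - δ) ≤ chiFn δ x :=
      rpow_le_rpow_of_exponent_le hx1 (le_chiExponent hδ0 x)
    linarith

theorem hasDerivAt_chiFn {x : ℝ} (hx : 0 < x) : HasDerivAt (chiFn δ) (chiFnDeriv δ x) x := by
  have hexp : HasDerivAt (chiExponent δ) (-(δ * sin (log (x + 1))) / (x + 1)) x :=
    (((((hasDerivAt_id x).add_const 1).log (by simp; linarith)).cos.const_mul δ).const_add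
      (1 / 2)).congr_deriv (by simp; ring)
  exact ((hasDerivAt_id x).rpow hexp hx).congr_deriv (by simp [chiFnDeriv]; ring)

theorem abs_chiFnDeriv_le (hδ0 : 0 ≤ δ) (hδ : δ ≤ 1 / 2) {x : ℝ} (hx : 1 ≤ x) :
    |chiFnDeriv δ x| ≤ x ^ (1 / 2 + δ - 1) * (1 + log x) := by
  have hx0 : 0 < x := by linarith
  have hp := chiExponent_le hδ0 x
  have hp0 : 0 ≤ chiExponent δ x := by linarith [le_chiExponent hδ0 x]
  have hlog : 0 ≤ log x := log_nonneg hx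
  have hpow : x ^ (chiExponent δ x - 1) ≤ x ^ (1 / 2 + δ - 1) :=
    rpow_le_rpow_of_exponent_le hx (by linarith)
  have hfirst : |chiExponent δ x * x ^ (chiExponent δ x - 1)| ≤ x ^ (1 / 2 + δ - 1) := by
    rw [abs_of_nonneg (by positivity)]
    nlinarith [rpow_nonneg hx0.le (chiExponent δ x - 1)]
  have hsecond : |δ * sin (log (x + 1)) / (x + 1) * x ^ chiExponent δ x * log x|
      ≤ x ^ (1 / 2 + δ - 1) * log x := by
    have hcoef : |δ * sin (log (x + 1)) / (x + 1)| ≤ x⁻¹ := by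
      rw [abs_div, abs_mul, abs_of_nonneg hδ0, abs_of_pos (by linarith : 0 < x + 1)]
      calc δ * |sin (log (x + 1))| / (x + 1) ≤ 1 * 1 / x := by
            gcongr
            · linarith
            · exact abs_sin_le_one _
            · linarith
        _ = x⁻¹ := by ring
    calc |δ * sin (log (x + 1)) / (x + 1) * x ^ chiExponent δ x * log x|
        ≤ x⁻¹ * x ^ (1 / 2 + δ) * log x := by
          rw [abs_mul, abs_mul, abs_of_nonneg (rpow_nonneg hx0.le _), abs_of_nonneg hlog]
          gcongr
      _ = x ^ (1 / 2 + δ - 1) * log x := by rw [rpow_sub_one hx0.ne']; ring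
  calc |chiFnDeriv δ x| ≤ x ^ (1 / 2 + δ - 1) + x ^ (1 / 2 + δ - 1) * log x :=
        (abs_sub _ _).trans (add_le_add hfirst hsecond)
    _ = x ^ (1 / 2 + δ - 1) * (1 + log x) := by ring

theorem tendsto_chiFnDeriv_atTop (hδ0 : 0 ≤ δ) (hδ : δ < 1 / 2) :
    Tendsto (chiFnDeriv δ) atTop (𝓝 0) := by
  have hr : 0 < 1 - (1 / 2 + δ) := by linarith
  have hpow : Tendsto (fun x : ℝ => x ^ (1 / 2 + δ - 1)) atTop (𝓝 0) := by
    simpa using tendsto_rpow_neg_atTop hr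
  have hlog : Tendsto (fun x : ℝ => log x * x ^ (1 / 2 + δ - 1)) atTop (𝓝 0) := by
    refine (isLittleO_log_rpow_atTop hr).tendsto_div_nhds_zero.congr' ?_
    filter_upwards [eventually_gt_atTop 0] with x hx
    rw [div_eq_mul_inv, ← rpow_neg hx.le, neg_sub]
  have hbound : Tendsto (fun x : ℝ => x ^ (1 / 2 + δ - 1) * (1 + log x)) atTop (𝓝 0) := by
    simpa [mul_add, mul_comm] using hpow.add hlog
  refine squeeze_zero_norm' ?_ hbound
  filter_upwards [eventually_ge_atTop 1] with x hx
  exact abs_chiFnDeriv_le hδ0 hδ.le hx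

theorem tendsto_chiFn_add_sub_chiFn (hδ0 : 0 ≤ δ) (hδ : δ < 1 / 2) (t : ℝ) :
    Tendsto (fun x => chiFn δ (x + t) - chiFn δ x) atTop (𝓝 0) :=
  tendsto_sub_comp_add_of_tendsto_deriv
    (by filter_upwards [eventually_gt_atTop 0] with x hx using hasDerivAt_chiFn hx)
    (tendsto_chiFnDeriv_atTop hδ0 hδ) t

end Chi

section Density

variable {δ : ℝ}

theorem integrableOn_exp_neg_chiFn (hδ0 : 0 ≤ δ) (hδ : δ < 1 / 2) :
    IntegrableOn (fun y => exp (-chiFn δ y)) (Ioi 0) := by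
  have hdom :
      IntegrableOn (fun y : ℝ => exp 1 * (y ^ (0 : ℝ) * exp (-y ^ (1 / 2 - δ)))) (Ioi 0) :=
    (integrableOn_rpow_mul_exp_neg_rpow (by norm_num) (by linarith)).const_mul _
  refine hdom.mono' measurable_chiFn.neg.exp.aestronglyMeasurable ?_
  filter_upwards [ae_restrict_mem measurableSet_Ioi] with y hy
  rw [norm_of_nonneg (exp_pos _).le, rpow_zero, one_mul, ← exp_add, exp_le_exp]
  linarith [rpow_sub_one_le_chiFn hδ0 hδ.le (le_of_lt hy)]

theorem clineA_nonneg : 0 ≤ clineA δ :=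
  inv_nonneg.2 (setIntegral_nonneg measurableSet_Ioi fun _ _ => (exp_pos _).le)

theorem clineA_pos (hδ0 : 0 ≤ δ) (hδ : δ < 1 / 2) : 0 < clineA δ := by
  have : NeZero (volume.restrict (Ioi (0 : ℝ))) := ⟨by simp⟩
  exact inv_pos.2 (integral_exp_pos (integrableOn_exp_neg_chiFn hδ0 hδ))

theorem clineF_of_nonneg {x : ℝ} (hx : 0 ≤ x) : clineF δ x = clineA δ * exp (-chiFn δ x) :=
  if_neg hx.not_gt

theorem clineF_nonneg (x : ℝ) : 0 ≤ clineF δ x := by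
  unfold clineF; split_ifs
  · exact le_rfl
  · exact mul_nonneg clineA_nonneg (exp_pos _).le

theorem clineF_le_clineA (x : ℝ) : clineF δ x ≤ clineA δ := by
  unfold clineF; split_ifs with hx
  · exact clineA_nonneg
  · exact mul_le_of_le_one_right clineA_nonneg
      (exp_le_one_iff.2 (neg_nonpos.2 (chiFn_nonneg (not_lt.1 hx))))

theorem measurable_clineF : Measurable (clineF δ) := by
  unfold clineF
  exact Measurable.ite measurableSet_Iio measurable_const
    (measurable_const.mul measurable_chiFn.neg.exp)

theorem longTailedDensity_clineF (hδ0 : 0 ≤ δ) (hδ : δ < 1 / 2) :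
    LongTailedDensity (clineF δ) := by
  refine ⟨?_, fun t => ?_⟩
  · filter_upwards [eventually_ge_atTop 0] with x hx
    rw [clineF_of_nonneg hx]
    exact mul_pos (clineA_pos hδ0 hδ) (exp_pos _)
  · have hexp : Tendsto (fun x => exp (-(chiFn δ (x + t) - chiFn δ x))) atTop (𝓝 1) :=
      tendsto_exp_nhds_zero_nhds_one.comp
        (by simpa using (tendsto_chiFn_add_sub_chiFn hδ0 hδ t).neg)
    refine hexp.congr' ?_
    filter_upwards [eventually_ge_atTop (max 0 (-t))] with x hx
    rw [clineF_of_nonneg (by linarith [le_max_right 0 (-t)]),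
      clineF_of_nonneg (le_of_max_le_left hx), mul_div_mul_left _ _ (clineA_pos hδ0 hδ).ne',
      ← exp_sub]
    ring_nf

end Density

def convolutionRatio (f : ℝ → ℝ) (x : ℝ) : ℝ :=
  (∫ y in (0 : ℝ)..x, f (x - y) * f y) / f x

theorem log_four_thirds_pos : 0 < log (4 / 3) := log_pos (by norm_num)

theorem log_four_thirds_le : log (4 / 3) ≤ 1 / 3 := by
  linarith [log_le_sub_one_of_pos (by norm_num : (0 : ℝ) < 4 / 3)]

theorem cos_log_four_thirds_nonneg : 0 ≤ cos (log (4 / 3)) :=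
  cos_nonneg_of_neg_pi_div_two_le_of_le (by linarith [log_four_thirds_pos, pi_pos])
    (by linarith [log_four_thirds_le, pi_gt_three])

theorem cos_log_four_thirds_lt_one : cos (log (4 / 3)) < 1 := by
  simpa using cos_lt_cos_of_nonneg_of_le_pi le_rfl
    (by linarith [log_four_thirds_le, pi_gt_three]) log_four_thirds_pos

theorem cos_log_add_one_le_of_mem_Icc {x y : ℝ} (hx : cos (log (x + 1)) = 1) (hx3 : 3 ≤ x)
    (hy : y ∈ Icc (x / 3) (2 * x / 3)) : cos (log (y + 1)) ≤ cos (log (4 / 3)) := by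
  obtain ⟨hy1, hy2⟩ := hy
  have hy0 : 0 < y + 1 := by linarith
  have hr43 : 4 / 3 ≤ (x + 1) / (y + 1) := by rw [le_div_iff₀ hy0]; linarith
  have hr3 : (x + 1) / (y + 1) ≤ 3 := by rw [div_le_iff₀ hy0]; linarith
  have hlog_nonneg : 0 ≤ log ((x + 1) / (y + 1)) := log_nonneg (by linarith)
  have hphase : log (y + 1) = log (x + 1) + -log ((x + 1) / (y + 1)) := by
    rw [log_div (by linarith) hy0.ne']; ring
  rw [hphase]
  refine cos_add_le_cos_of_cos_eq_one hx log_four_thirds_pos.le ?_ ?_ <;>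
    rw [abs_neg, abs_of_nonneg hlog_nonneg]
  · exact log_le_log (by norm_num) hr43
  · calc log ((x + 1) / (y + 1)) ≤ log 3 := log_le_log (by linarith) hr3
      _ ≤ 3 - 1 := log_le_sub_one_of_pos (by norm_num)
      _ ≤ π := by linarith [pi_gt_three]

section Convolution

variable {δ x : ℝ}

theorem chiFn_of_cos_log_eq_one (hx : cos (log (x + 1)) = 1) : chiFn δ x = x ^ (1 / 2 + δ) := by
  rw [chiFn, hx, mul_one]

theorem chiFn_le_of_mem_Icc (hδ : 0 ≤ δ) (hx : cos (log (x + 1)) = 1) (hx3 : 3 ≤ x) {y : ℝ}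
    (hy : y ∈ Icc (x / 3) (2 * x / 3)) : chiFn δ y ≤ x ^ (1 / 2 + δ * cos (log (4 / 3))) := by
  have hβ : 0 ≤ 1 / 2 + δ * cos (log (4 / 3)) := by
    have := mul_nonneg hδ cos_log_four_thirds_nonneg; linarith
  calc chiFn δ y ≤ y ^ (1 / 2 + δ * cos (log (4 / 3))) :=
        rpow_le_rpow_of_exponent_le (by linarith [hy.1]) (by
          gcongr
          exact cos_log_add_one_le_of_mem_Icc hx hx3 hy)
    _ ≤ x ^ (1 / 2 + δ * cos (log (4 / 3))) :=
        rpow_le_rpow (by linarith [hy.1]) (by linarith [hy.2]) hβ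

theorem intervalIntegrable_clineF_conv (u v : ℝ) :
    IntervalIntegrable (fun y => clineF δ (x - y) * clineF δ y) volume u v := by
  refine (intervalIntegrable_const (c := clineA δ ^ 2)).mono_fun'
    ((measurable_clineF.comp (measurable_const.sub measurable_id)).mul
      measurable_clineF).aestronglyMeasurable (Eventually.of_forall fun y => ?_)
  show ‖clineF δ (x - y) * clineF δ y‖ ≤ clineA δ ^ 2
  rw [norm_of_nonneg (mul_nonneg (clineF_nonneg _) (clineF_nonneg _)), sq]
  exact mul_le_mul (clineF_le_clineA _) (clineF_le_clineA _) (clineF_nonneg _) clineA_nonneg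

theorem mul_exp_le_integral_clineF_conv (hδ : 0 ≤ δ) (hx : cos (log (x + 1)) = 1)
    (hx3 : 3 ≤ x) :
    x / 3 * (clineA δ ^ 2 * exp (-(2 * x ^ (1 / 2 + δ * cos (log (4 / 3))))))
      ≤ ∫ y in (0 : ℝ)..x, clineF δ (x - y) * clineF δ y := by
  set β := 1 / 2 + δ * cos (log (4 / 3))
  have hclineF : ∀ y ∈ Icc (x / 3) (2 * x / 3), clineA δ * exp (-x ^ β) ≤ clineF δ y := by
    intro y hy
    rw [clineF_of_nonneg (by linarith [hy.1])]
    exact mul_le_mul_of_nonneg_left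
      (exp_le_exp.2 (neg_le_neg (chiFn_le_of_mem_Icc hδ hx hx3 hy))) clineA_nonneg
  have hpoint : ∀ y ∈ Icc (x / 3) (2 * x / 3),
      clineA δ ^ 2 * exp (-(2 * x ^ β)) ≤ clineF δ (x - y) * clineF δ y := by
    intro y hy
    have hxy : x - y ∈ Icc (x / 3) (2 * x / 3) := ⟨by linarith [hy.2], by linarith [hy.1]⟩
    calc clineA δ ^ 2 * exp (-(2 * x ^ β))
        = (clineA δ * exp (-x ^ β)) * (clineA δ * exp (-x ^ β)) := by
          rw [mul_mul_mul_comm, ← exp_add]; ring_nf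
      _ ≤ clineF δ (x - y) * clineF δ y :=
          mul_le_mul (hclineF _ hxy) (hclineF y hy)
            (mul_nonneg clineA_nonneg (exp_pos _).le) (clineF_nonneg _)
  calc x / 3 * (clineA δ ^ 2 * exp (-(2 * x ^ β)))
      = ∫ _ in (x / 3)..(2 * x / 3), clineA δ ^ 2 * exp (-(2 * x ^ β)) := by
        rw [intervalIntegral.integral_const, smul_eq_mul]; ring
    _ ≤ ∫ y in (x / 3)..(2 * x / 3), clineF δ (x - y) * clineF δ y :=
        intervalIntegral.integral_mono_on (by linarith) intervalIntegrable_const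
          (intervalIntegrable_clineF_conv _ _) hpoint
    _ ≤ ∫ y in (0 : ℝ)..x, clineF δ (x - y) * clineF δ y :=
        intervalIntegral.integral_mono_interval (by linarith) (by linarith) (by linarith)
          (Eventually.of_forall fun y => mul_nonneg (clineF_nonneg _) (clineF_nonneg _))
          (intervalIntegrable_clineF_conv _ _)

theorem le_convolutionRatio_clineF (hδ0 : 0 ≤ δ) (hδ : δ < 1 / 2)
    (hx : cos (log (x + 1)) = 1) (hx3 : 3 ≤ x) :
    x / 3 * clineA δ * exp (x ^ (1 / 2 + δ) - 2 * x ^ (1 / 2 + δ * cos (log (4 / 3))))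
      ≤ convolutionRatio (clineF δ) x := by
  have ha := clineA_pos hδ0 hδ
  rw [convolutionRatio, clineF_of_nonneg (by linarith), chiFn_of_cos_log_eq_one hx,
    le_div_iff₀ (by positivity)]
  refine le_trans (le_of_eq ?_) (mul_exp_le_integral_clineF_conv hδ0 hx hx3)
  rw [mul_mul_mul_comm, ← exp_add]; ring_nf

theorem not_tendsto_convolutionRatio_clineF (hδ0 : 0 < δ) (hδ : δ < 1 / 2) (L : ℝ) :
    ¬ Tendsto (convolutionRatio (clineF δ)) atTop (𝓝 L) := by
  intro hL
  have hβ0 : 0 < 1 / 2 + δ * cos (log (4 / 3)) := by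
    have := mul_nonneg hδ0.le cos_log_four_thirds_nonneg; linarith
  have hβα : 1 / 2 + δ * cos (log (4 / 3)) < 1 / 2 + δ := by
    linarith [mul_lt_of_lt_one_right hδ0 cos_log_four_thirds_lt_one]
  set bound : ℝ → ℝ := fun x => x / 3 * clineA δ *
    exp (x ^ (1 / 2 + δ) - 2 * x ^ (1 / 2 + δ * cos (log (4 / 3))))
  have hbound : Tendsto bound atTop atTop :=
    ((tendsto_id.atTop_div_const (by norm_num : (0 : ℝ) < 3)).atTop_mul_const
      (clineA_pos hδ0.le hδ)).atTop_mul_atTop₀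
      (tendsto_exp_atTop.comp (tendsto_rpow_sub_mul_rpow_atTop hβ0 hβα 2))
  set xn : ℕ → ℝ := fun n => exp (n * (2 * π)) - 1
  have hxn : Tendsto xn atTop atTop :=
    tendsto_atTop_add_const_right _ _
      (tendsto_exp_atTop.comp (tendsto_natCast_atTop_atTop.atTop_mul_const (by positivity)))
  have hlower : ∀ᶠ n in atTop, bound (xn n) ≤ convolutionRatio (clineF δ) (xn n) := by
    filter_upwards [eventually_ge_atTop 1] with n hn
    refine le_convolutionRatio_clineF hδ0.le hδ ?_ ?_
    · simp only [xn, sub_add_cancel, log_exp, cos_nat_mul_two_pi]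
    · have hn' : (1 : ℝ) ≤ n := by exact_mod_cast hn
      simp only [xn]
      nlinarith [add_one_le_exp (n * (2 * π)), pi_gt_three]
  exact not_tendsto_nhds_of_tendsto_atTop
    (tendsto_atTop_mono' _ hlower (hbound.comp hxn)) L (hL.comp hxn)

end Convolution

theorem cline_density_not_subexponential (δ : ℝ) (hδ0 : 0 < δ) (hδ : δ < 1/2) :
    LongTailedDensity (clineF δ) ∧
    ¬ Tendsto (fun x =>
        (∫ y in (0:ℝ)..x, clineF δ (x - y) * clineF δ y) / clineF δ x)
      atTop (nhds 2) :=
  ⟨longTailedDensity_clineF hδ0.le hδ, not_tendsto_convolutionRatio_clineF hδ0 hδ 2⟩
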